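/- Let A, Ã ∈ ℝ^{m×n}, let 𝒳 ⊆ ℝ^{m×k} and 𝒴 ⊆ ℝ^{n×k} be nonempty finite sets, and set μ_𝒳 = max_{X∈𝒳} ‖X‖_F, μ_𝒴 = max_{Y∈𝒴} ‖Y‖_F. Let (X⋆, Y⋆) ∈ 𝒳×𝒴 maximize Tr(XᵀAY) over 𝒳×𝒴 and let (X̃⋆, Ỹ⋆) ∈ 𝒳×𝒴 maximize Tr(XᵀÃY) over 𝒳×𝒴. Let 0 < γ ≤ 1 and C ∈ ℝ. If (X̃, Ỹ) ∈ 𝒳×𝒴 satisfies Tr(X̃ᵀÃỸ) ≥ γ·Tr(X̃⋆ᵀÃỸ⋆) − C, then Tr(X̃ᵀAỸ) ≥ γ·Tr(X⋆ᵀAY⋆) − C − 2·‖A−Ã‖₂·μ_𝒳·μ_𝒴. -/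

import Mathlib

open Matrix

/-- The Frobenius norm of a real matrix. -/
noncomputable def frobNorm {m n : ℕ} (A : Matrix (Fin m) (Fin n) ℝ) : ℝ :=
  Real.sqrt (∑ i, ∑ j, (A i j) ^ 2)

/-- The spectral norm (largest singular value): the supremum of the Euclidean norm of
`A x` over the Euclidean unit ball. -/
noncomputable def specNorm {m n : ℕ} (A : Matrix (Fin m) (Fin n) ℝ) : ℝ :=
  sSup {t : ℝ | ∃ x : Fin n → ℝ, ∑ j, (x j) ^ 2 ≤ 1 ∧
    t = Real.sqrt (∑ i, (∑ j, A i j * x j) ^ 2)}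

lemma specSet_nonempty {m n : ℕ} (A : Matrix (Fin m) (Fin n) ℝ) :
    {t : ℝ | ∃ x : Fin n → ℝ, ∑ j, (x j) ^ 2 ≤ 1 ∧
      t = Real.sqrt (∑ i, (∑ j, A i j * x j) ^ 2)}.Nonempty :=
  ⟨0, fun _ => 0, by simp⟩

lemma specSet_bddAbove {m n : ℕ} (A : Matrix (Fin m) (Fin n) ℝ) :
    BddAbove {t : ℝ | ∃ x : Fin n → ℝ, ∑ j, (x j) ^ 2 ≤ 1 ∧
      t = Real.sqrt (∑ i, (∑ j, A i j * x j) ^ 2)} := by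
  refine ⟨frobNorm A, ?_⟩
  rintro t ⟨x, hx, rfl⟩
  rw [frobNorm]
  apply Real.sqrt_le_sqrt
  apply Finset.sum_le_sum
  intro i _
  calc (∑ j, A i j * x j) ^ 2 ≤ (∑ j, (A i j) ^ 2) * ∑ j, (x j) ^ 2 :=
        Finset.sum_mul_sq_le_sq_mul_sq _ _ _
    _ ≤ (∑ j, (A i j) ^ 2) * 1 := by
        apply mul_le_mul_of_nonneg_left hx (by positivity)
    _ = ∑ j, (A i j) ^ 2 := mul_one _

lemma specNorm_nonneg {m n : ℕ} (A : Matrix (Fin m) (Fin n) ℝ) : 0 ≤ specNorm A := by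
  refine le_csSup (specSet_bddAbove A) ?_
  exact ⟨fun _ => 0, by simp⟩

lemma mulvec_norm_le {m n : ℕ} (A : Matrix (Fin m) (Fin n) ℝ) (x : Fin n → ℝ) :
    Real.sqrt (∑ i, (∑ j, A i j * x j) ^ 2) ≤ specNorm A * Real.sqrt (∑ j, (x j) ^ 2) := by
  set s := Real.sqrt (∑ j, (x j) ^ 2) with hs
  rcases eq_or_lt_of_le (Real.sqrt_nonneg (∑ j, (x j) ^ 2)) with h0 | hpos
  · -- s = 0, so x = 0
    have hsum : ∑ j, (x j) ^ 2 = 0 := by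
      have h' := Real.sqrt_eq_zero' (x := ∑ j, (x j) ^ 2) |>.mp h0.symm
      exact le_antisymm h' (Finset.sum_nonneg fun j _ => sq_nonneg _)
    have hx : ∀ j, x j = 0 := by
      intro j
      have := (Finset.sum_eq_zero_iff_of_nonneg (fun j _ => sq_nonneg (x j))).mp hsum j
        (Finset.mem_univ j)
      exact pow_eq_zero_iff (by norm_num) |>.mp this
    have : (∑ i, (∑ j, A i j * x j) ^ 2) = 0 := by simp [hx]
    rw [this, Real.sqrt_zero]
    exact mul_nonneg (specNorm_nonneg A) (Real.sqrt_nonneg _)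
  · have hsle : Real.sqrt (∑ i, (∑ j, A i j * (s⁻¹ * x j)) ^ 2) ≤ specNorm A := by
      apply le_csSup (specSet_bddAbove A)
      refine ⟨fun j => s⁻¹ * x j, ?_, rfl⟩
      have : ∑ j, (s⁻¹ * x j) ^ 2 = s⁻¹ ^ 2 * ∑ j, (x j) ^ 2 := by
        rw [Finset.mul_sum]; congr 1; ext j; ring
      rw [this]
      have hss : s ^ 2 = ∑ j, (x j) ^ 2 :=
        Real.sq_sqrt (Finset.sum_nonneg fun j _ => sq_nonneg _)
      have hspos : 0 < s := hpos
      rw [← hss, inv_pow]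
      rw [inv_mul_le_one₀ (by positivity)]
    have key : Real.sqrt (∑ i, (∑ j, A i j * (s⁻¹ * x j)) ^ 2)
        = s⁻¹ * Real.sqrt (∑ i, (∑ j, A i j * x j) ^ 2) := by
      have : ∑ i, (∑ j, A i j * (s⁻¹ * x j)) ^ 2
          = s⁻¹ ^ 2 * ∑ i, (∑ j, A i j * x j) ^ 2 := by
        rw [Finset.mul_sum]; congr 1; ext i
        have h1 : ∑ j, A i j * (s⁻¹ * x j) = s⁻¹ * ∑ j, A i j * x j := by
          rw [Finset.mul_sum]; congr 1; ext j; ring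
        rw [h1]; ring
      rw [this, Real.sqrt_mul (by positivity), Real.sqrt_sq (by positivity)]
    rw [key] at hsle
    calc Real.sqrt (∑ i, (∑ j, A i j * x j) ^ 2)
        = s * (s⁻¹ * Real.sqrt (∑ i, (∑ j, A i j * x j) ^ 2)) := by
          rw [← mul_assoc, mul_inv_cancel₀ (hpos.ne' : s ≠ 0), one_mul]
      _ ≤ s * specNorm A := by
          apply mul_le_mul_of_nonneg_left hsle (le_of_lt hpos)
      _ = specNorm A * s := mul_comm _ _

lemma frobNorm_nonneg {m n : ℕ} (A : Matrix (Fin m) (Fin n) ℝ) : 0 ≤ frobNorm A :=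
  Real.sqrt_nonneg _

lemma abs_trace_le {m n k : ℕ} (M : Matrix (Fin m) (Fin n) ℝ)
    (X : Matrix (Fin m) (Fin k) ℝ) (Y : Matrix (Fin n) (Fin k) ℝ) :
    |Matrix.trace (Xᵀ * M * Y)| ≤ specNorm M * frobNorm X * frobNorm Y := by
  have htr : Matrix.trace (Xᵀ * M * Y)
      = ∑ l, ∑ i, X i l * (∑ j, M i j * Y j l) := by
    rw [Matrix.trace]
    congr 1; ext l
    rw [Matrix.diag_apply, Matrix.mul_apply]
    simp only [Matrix.mul_apply, Matrix.transpose_apply, Finset.sum_mul, Finset.mul_sum,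
      mul_assoc]
    exact Finset.sum_comm (f := fun j i => X i l * (M i j * Y j l))
  rw [htr]
  set a : Fin k → ℝ := fun l => Real.sqrt (∑ i, (X i l) ^ 2) with ha
  set b : Fin k → ℝ := fun l => Real.sqrt (∑ j, (Y j l) ^ 2) with hb
  have step1 : ∀ l, |∑ i, X i l * (∑ j, M i j * Y j l)| ≤ a l * (specNorm M * b l) := by
    intro l
    have cs : |∑ i, X i l * (∑ j, M i j * Y j l)|
        ≤ a l * Real.sqrt (∑ i, (∑ j, M i j * Y j l) ^ 2) := by
      rw [← Real.sqrt_sq_eq_abs, ha]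
      rw [← Real.sqrt_mul (Finset.sum_nonneg fun i _ => sq_nonneg _)]
      exact Real.sqrt_le_sqrt (Finset.sum_mul_sq_le_sq_mul_sq _ _ _)
    refine cs.trans ?_
    apply mul_le_mul_of_nonneg_left _ (Real.sqrt_nonneg _)
    exact mulvec_norm_le M (fun j => Y j l)
  calc |∑ l, ∑ i, X i l * (∑ j, M i j * Y j l)|
      ≤ ∑ l, |∑ i, X i l * (∑ j, M i j * Y j l)| := Finset.abs_sum_le_sum_abs _ _
    _ ≤ ∑ l, a l * (specNorm M * b l) := Finset.sum_le_sum fun l _ => step1 l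
    _ = specNorm M * ∑ l, a l * b l := by rw [Finset.mul_sum]; congr 1; ext l; ring
    _ ≤ specNorm M * (frobNorm X * frobNorm Y) := by
        apply mul_le_mul_of_nonneg_left _ (specNorm_nonneg M)
        have := Real.sum_sqrt_mul_sqrt_le (Finset.univ : Finset (Fin k))
          (f := fun l => ∑ i, (X i l) ^ 2) (g := fun l => ∑ j, (Y j l) ^ 2)
          (fun l => Finset.sum_nonneg fun i _ => sq_nonneg _)
          (fun l => Finset.sum_nonneg fun j _ => sq_nonneg _)
        have e1 : (∑ l : Fin k, ∑ i : Fin m, (X i l) ^ 2)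
            = ∑ i : Fin m, ∑ l : Fin k, (X i l) ^ 2 := Finset.sum_comm
        have e2 : (∑ l : Fin k, ∑ j : Fin n, (Y j l) ^ 2)
            = ∑ j : Fin n, ∑ l : Fin k, (Y j l) ^ 2 := Finset.sum_comm
        rw [e1, e2] at this
        exact this.trans (le_of_eq (by rw [frobNorm, frobNorm]))
    _ = specNorm M * frobNorm X * frobNorm Y := by ring

/-- If `(X⋆, Y⋆)` maximizes `Tr(XᵀAY)` and `(X̃⋆, Ỹ⋆)` maximizes `Tr(XᵀÃY)` over
`𝒳 × 𝒴`, and `(X̃, Ỹ) ∈ 𝒳 × 𝒴` satisfies `Tr(X̃ᵀÃỸ) ≥ γ·Tr(X̃⋆ᵀÃỸ⋆) − C`, then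
`Tr(X̃ᵀAỸ) ≥ γ·Tr(X⋆ᵀAY⋆) − C − 2·‖A−Ã‖₂·μ_𝒳·μ_𝒴`. -/
theorem sketch_solution_guarantee {m n k : ℕ}
    (A Atil : Matrix (Fin m) (Fin n) ℝ)
    (𝒳 : Finset (Matrix (Fin m) (Fin k) ℝ)) (𝒴 : Finset (Matrix (Fin n) (Fin k) ℝ))
    (h𝒳 : 𝒳.Nonempty) (h𝒴 : 𝒴.Nonempty)
    (μX μY : ℝ) (hμX : μX = 𝒳.sup' h𝒳 frobNorm) (hμY : μY = 𝒴.sup' h𝒴 frobNorm)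
    (Xstar : Matrix (Fin m) (Fin k) ℝ) (Ystar : Matrix (Fin n) (Fin k) ℝ)
    (hXstar : Xstar ∈ 𝒳) (hYstar : Ystar ∈ 𝒴)
    (hopt : ∀ X ∈ 𝒳, ∀ Y ∈ 𝒴,
      Matrix.trace (Xᵀ * A * Y) ≤ Matrix.trace (Xstarᵀ * A * Ystar))
    (Xtstar : Matrix (Fin m) (Fin k) ℝ) (Ytstar : Matrix (Fin n) (Fin k) ℝ)
    (hXtstar : Xtstar ∈ 𝒳) (hYtstar : Ytstar ∈ 𝒴)
    (htopt : ∀ X ∈ 𝒳, ∀ Y ∈ 𝒴,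
      Matrix.trace (Xᵀ * Atil * Y) ≤ Matrix.trace (Xtstarᵀ * Atil * Ytstar))
    (γ C : ℝ) (hγ : 0 < γ) (hγ1 : γ ≤ 1)
    (Xt : Matrix (Fin m) (Fin k) ℝ) (Yt : Matrix (Fin n) (Fin k) ℝ)
    (hXt : Xt ∈ 𝒳) (hYt : Yt ∈ 𝒴)
    (hnear : Matrix.trace (Xtᵀ * Atil * Yt)
      ≥ γ * Matrix.trace (Xtstarᵀ * Atil * Ytstar) - C) :
    Matrix.trace (Xtᵀ * A * Yt)
      ≥ γ * Matrix.trace (Xstarᵀ * A * Ystar) - C - 2 * specNorm (A - Atil) * μX * μY := by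
  set E := specNorm (A - Atil) * μX * μY with hE
  have hμX0 : 0 ≤ μX := (frobNorm_nonneg Xstar).trans (hμX ▸ Finset.le_sup' frobNorm hXstar)
  have hμY0 : 0 ≤ μY := (frobNorm_nonneg Ystar).trans (hμY ▸ Finset.le_sup' frobNorm hYstar)
  have hbound : ∀ X ∈ 𝒳, ∀ Y ∈ 𝒴, |Matrix.trace (Xᵀ * (A - Atil) * Y)| ≤ E := by
    intro X hX Y hY
    refine (abs_trace_le (A - Atil) X Y).trans ?_
    have h1 : frobNorm X ≤ μX := hμX ▸ Finset.le_sup' frobNorm hX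
    have h2 : frobNorm Y ≤ μY := hμY ▸ Finset.le_sup' frobNorm hY
    have hmm : frobNorm X * frobNorm Y ≤ μX * μY :=
      mul_le_mul h1 h2 (frobNorm_nonneg Y) hμX0
    calc specNorm (A - Atil) * frobNorm X * frobNorm Y
        = specNorm (A - Atil) * (frobNorm X * frobNorm Y) := mul_assoc _ _ _
      _ ≤ specNorm (A - Atil) * (μX * μY) :=
          mul_le_mul_of_nonneg_left hmm (specNorm_nonneg _)
      _ = E := by rw [hE]; ring
  have split : ∀ (X : Matrix (Fin m) (Fin k) ℝ) (Y : Matrix (Fin n) (Fin k) ℝ),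
      Matrix.trace (Xᵀ * (A - Atil) * Y)
        = Matrix.trace (Xᵀ * A * Y) - Matrix.trace (Xᵀ * Atil * Y) := by
    intro X Y
    rw [Matrix.mul_sub, Matrix.sub_mul, Matrix.trace_sub]
  have hE0 : 0 ≤ E := by
    rw [hE]
    have := specNorm_nonneg (A - Atil)
    positivity
  have t1 := abs_le.mp (hbound Xt hXt Yt hYt)
  have t2 := abs_le.mp (hbound Xstar hXstar Ystar hYstar)
  have t3 := htopt Xstar hXstar Ystar hYstar
  have s1 := split Xt Yt
  have s2 := split Xstar Ystar
  have hγE : γ * E ≤ E := by nlinarith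
  nlinarith [mul_le_mul_of_nonneg_left t3 hγ.le]
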